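/- Under the assumptions of the general performance-difference identity and the Wasserstein bound (Q^τ is L_Q-Lipschitz in actions, b a belief kernel satisfying the kernel-commutation property), the Q-value difference satisfies E_{a∼π(·|x), x^τ∼b(·|x)}[Q^τ(x^τ,a) − Q^π(x,a)] ≤ (γ L_Q/(1−γ)) · E_{a∼π(·|x), x'∼P(·|x,a), x̂∼d^π_{x'}, x̂^τ∼b(·|x̂)}[W₁(π^τ(·|x̂^τ), π(·|x̂))] for every state x. -/

import Mathlib

/-!
The value gap `Δ x = 𝔼_{b x} Vτ - V x` satisfies the Bellman equation `Δ = D + γ P^π Δ` of `π`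
whose reward `D x = 𝔼_{xτ ∼ b x} [𝔼_{πτ xτ} Qτ xτ - 𝔼_{π x} Qτ xτ]` is the advantage of `πτ`
over `π` seen through the belief; this uses reward matching and kernel commutation. The defining
recursion of `d` says that `(1 - γ)⁻¹ 𝔼_{d x} D` solves the same equation, so by contraction
`Δ = (1 - γ)⁻¹ 𝔼_d D`, and the Q-value gap averaged over `π x` is `γ (P^π Δ) x`.
Finally `D ≤ L_Q 𝔼_b W₁`, since a coupling of `πτ xτ` and `π x` turns the difference of
expectations of the `L_Q`-Lipschitz `Qτ xτ` into an expected `L_Q`-multiple of the transport cost.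
-/

open scoped ENNReal

/-- Expectation of a real-valued function under a `PMF` on a finite type. -/
noncomputable def Epmf {α : Type*} [Fintype α] (μ : PMF α) (f : α → ℝ) : ℝ :=
  ∑ a, (μ a).toReal * f a

/-- The L1-Wasserstein distance between two probability distributions on a finite
metric space, defined via couplings. -/
noncomputable def W1 {α : Type*} [Fintype α] [MetricSpace α] (μ ν : PMF α) : ℝ :=
  sInf { c | ∃ κ : PMF (α × α), PMF.map Prod.fst κ = μ ∧ PMF.map Prod.snd κ = ν ∧
      Epmf κ (fun p => dist p.1 p.2) = c }

section Expectation

variable {α β : Type*} [Fintype α] [Fintype β]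

lemma Epmf_const (μ : PMF α) (c : ℝ) : Epmf μ (fun _ => c) = c := by
  have hμ : ∑ a, (μ a).toReal = 1 := by
    rw [← ENNReal.toReal_sum fun a _ => μ.apply_ne_top a, ← tsum_fintype (L := .unconditional _),
      μ.tsum_coe, ENNReal.toReal_one]
  rw [Epmf, ← Finset.sum_mul, hμ, one_mul]

lemma Epmf_mono (μ : PMF α) {f g : α → ℝ} (h : ∀ a, f a ≤ g a) : Epmf μ f ≤ Epmf μ g :=
  Finset.sum_le_sum fun a _ => mul_le_mul_of_nonneg_left (h a) ENNReal.toReal_nonneg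

lemma Epmf_nonneg (μ : PMF α) {f : α → ℝ} (h : ∀ a, 0 ≤ f a) : 0 ≤ Epmf μ f :=
  Finset.sum_nonneg fun a _ => mul_nonneg ENNReal.toReal_nonneg (h a)

lemma Epmf_add (μ : PMF α) (f g : α → ℝ) :
    Epmf μ (fun a => f a + g a) = Epmf μ f + Epmf μ g := by
  simp only [Epmf, mul_add, Finset.sum_add_distrib]

lemma Epmf_sub (μ : PMF α) (f g : α → ℝ) :
    Epmf μ (fun a => f a - g a) = Epmf μ f - Epmf μ g := by
  simp only [Epmf, mul_sub, Finset.sum_sub_distrib]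

lemma Epmf_const_mul (μ : PMF α) (c : ℝ) (f : α → ℝ) :
    Epmf μ (fun a => c * f a) = c * Epmf μ f := by
  simp only [Epmf, Finset.mul_sum, mul_left_comm]

lemma abs_Epmf_le (μ : PMF α) {f : α → ℝ} {M : ℝ} (h : ∀ a, |f a| ≤ M) : |Epmf μ f| ≤ M := by
  refine abs_le.2 ⟨(Epmf_const μ (-M)).symm.trans_le ?_, (Epmf_mono μ ?_).trans_eq (Epmf_const μ M)⟩
  exacts [Epmf_mono μ fun a => (abs_le.1 (h a)).1, fun a => (abs_le.1 (h a)).2]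

lemma Epmf_comm (μ : PMF α) (ν : PMF β) (g : α → β → ℝ) :
    Epmf μ (fun a => Epmf ν (g a)) = Epmf ν (fun b => Epmf μ (fun a => g a b)) := by
  simp only [Epmf, Finset.mul_sum]
  rw [Finset.sum_comm]
  simp only [mul_left_comm]

lemma Epmf_map (μ : PMF α) (g : α → β) (f : β → ℝ) :
    Epmf (PMF.map g μ) f = Epmf μ (fun a => f (g a)) := by
  classical
  have hmap : ∀ b, (PMF.map g μ b).toReal = ∑ a, if b = g a then (μ a).toReal else 0 := by
    intro b
    rw [PMF.map_apply, tsum_fintype, ENNReal.toReal_sum fun a _ => by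
      split_ifs <;> simp [μ.apply_ne_top]]
    exact Finset.sum_congr rfl fun a _ => by split_ifs <;> simp
  simp only [Epmf, hmap, Finset.sum_mul, ite_mul, zero_mul]
  rw [Finset.sum_comm]
  simp

end Expectation

lemma exists_coupling {α : Type*} (μ ν : PMF α) :
    ∃ κ : PMF (α × α), PMF.map Prod.fst κ = μ ∧ PMF.map Prod.snd κ = ν := by
  refine ⟨μ.bind fun a => ν.map (Prod.mk a), ?_, ?_⟩
  · simp only [PMF.map_bind, PMF.map_comp]
    exact (congrArg μ.bind (funext fun a => PMF.map_const ν a)).trans μ.bind_pure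
  · simp only [PMF.map_bind, PMF.map_comp]
    exact (congrArg μ.bind (funext fun _ => PMF.map_id ν)).trans (μ.bind_const ν)

section Wasserstein

variable {A : Type*} [Fintype A] [MetricSpace A]

lemma Epmf_sub_le_of_coupling {μ ν : PMF A} {κ : PMF (A × A)}
    (hκ₁ : PMF.map Prod.fst κ = μ) (hκ₂ : PMF.map Prod.snd κ = ν) {f : A → ℝ} {L : ℝ}
    (hf : ∀ a₁ a₂, |f a₁ - f a₂| ≤ L * dist a₁ a₂) :
    Epmf μ f - Epmf ν f ≤ L * Epmf κ (fun p => dist p.1 p.2) := by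
  rw [← hκ₁, ← hκ₂, Epmf_map, Epmf_map, ← Epmf_sub, ← Epmf_const_mul]
  exact Epmf_mono κ fun p => (le_abs_self _).trans (hf p.1 p.2)

lemma Epmf_sub_le_mul_W1 (μ ν : PMF A) {f : A → ℝ} {L : ℝ}
    (hf : ∀ a₁ a₂, |f a₁ - f a₂| ≤ L * dist a₁ a₂) :
    Epmf μ f - Epmf ν f ≤ L * W1 μ ν := by
  set S := {c | ∃ κ : PMF (A × A), PMF.map Prod.fst κ = μ ∧ PMF.map Prod.snd κ = ν ∧
      Epmf κ (fun p => dist p.1 p.2) = c}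
  change _ ≤ L * sInf S
  obtain ⟨κ, hκ₁, hκ₂⟩ := exists_coupling μ ν
  have hκ : Epmf κ (fun p => dist p.1 p.2) ∈ S := ⟨κ, hκ₁, hκ₂, rfl⟩
  rcases le_or_gt 0 L with hL | hL
  · rw [← smul_eq_mul, ← Real.sInf_smul_of_nonneg hL]
    refine le_csInf ⟨_, Set.smul_mem_smul_set hκ⟩ ?_
    rintro _ ⟨_, ⟨κ', hκ'₁, hκ'₂, rfl⟩, rfl⟩
    exact Epmf_sub_le_of_coupling hκ'₁ hκ'₂ hf
  · have hbdd : BddBelow S := ⟨0, by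
      rintro _ ⟨κ', -, -, rfl⟩
      exact Epmf_nonneg κ' fun _ => dist_nonneg⟩
    exact (Epmf_sub_le_of_coupling hκ₁ hκ₂ hf).trans
      (mul_le_mul_of_nonpos_left (csInf_le hbdd hκ) hL.le)

end Wasserstein

section PolicyEvaluation

variable {X A : Type*} [Fintype X] [Fintype A]

/-- The expectation `(P^π f) x` of `f` after one step of the chain driven by `π` from `x`. -/
noncomputable def policyTransition (π : X → PMF A) (P : X → A → PMF X) (f : X → ℝ) (x : X) : ℝ :=
  Epmf (π x) fun a => Epmf (P x a) f

lemma abs_policyTransition_le (π : X → PMF A) (P : X → A → PMF X) {f : X → ℝ} {M : ℝ}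
    (h : ∀ x, |f x| ≤ M) (x : X) : |policyTransition π P f x| ≤ M :=
  abs_Epmf_le _ fun _ => abs_Epmf_le _ h

lemma policyTransition_sub (π : X → PMF A) (P : X → A → PMF X) (f g : X → ℝ) (x : X) :
    policyTransition π P (fun y => f y - g y) x
      = policyTransition π P f x - policyTransition π P g x := by
  simp only [policyTransition, Epmf_sub]

lemma policyTransition_const_mul (π : X → PMF A) (P : X → A → PMF X) (c : ℝ) (f : X → ℝ)
    (x : X) : policyTransition π P (fun y => c * f y) x = c * policyTransition π P f x := by
  simp only [policyTransition, Epmf_const_mul]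

lemma policyTransition_mono (π : X → PMF A) (P : X → A → PMF X) {f g : X → ℝ}
    (h : ∀ x, f x ≤ g x) (x : X) : policyTransition π P f x ≤ policyTransition π P g x :=
  Epmf_mono _ fun _ => Epmf_mono _ h

/-- `g ↦ r + γ P^π g` is a `|γ|`-contraction for the sup norm. -/
lemma bellman_solution_unique {π : X → PMF A} {P : X → A → PMF X} {γ : ℝ} (hγ : |γ| < 1)
    {r g₁ g₂ : X → ℝ} (h₁ : ∀ x, g₁ x = r x + γ * policyTransition π P g₁ x)
    (h₂ : ∀ x, g₂ x = r x + γ * policyTransition π P g₂ x) : g₁ = g₂ := by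
  funext x
  have : Nonempty X := ⟨x⟩
  obtain ⟨x₀, hx₀⟩ := Finite.exists_max fun y => |g₁ y - g₂ y|
  have hdiff : g₁ x₀ - g₂ x₀ = γ * policyTransition π P (fun y => g₁ y - g₂ y) x₀ := by
    rw [policyTransition_sub, mul_sub]
    linarith [h₁ x₀, h₂ x₀]
  have hcontract : |g₁ x₀ - g₂ x₀| ≤ |γ| * |g₁ x₀ - g₂ x₀| :=
    calc |g₁ x₀ - g₂ x₀| = |γ| * |policyTransition π P (fun y => g₁ y - g₂ y) x₀| := by
          rw [hdiff, abs_mul]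
      _ ≤ |γ| * |g₁ x₀ - g₂ x₀| :=
          mul_le_mul_of_nonneg_left (abs_policyTransition_le π P hx₀ x₀) (abs_nonneg γ)
  have hmax : |g₁ x₀ - g₂ x₀| = 0 := by
    nlinarith [abs_nonneg (g₁ x₀ - g₂ x₀), abs_nonneg γ]
  exact sub_eq_zero.1 (abs_nonpos_iff.1 ((hx₀ x).trans hmax.le))

lemma visitation_bellman {π : X → PMF A} {P : X → A → PMF X} {d : X → PMF X} {γ : ℝ}
    (hγ : γ ≠ 1) (hd : ∀ x₀ (f : X → ℝ), Epmf (d x₀) f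
      = (1 - γ) * f x₀ + γ * Epmf (π x₀) (fun a => Epmf (P x₀ a) (fun x' => Epmf (d x') f)))
    (f : X → ℝ) (x : X) :
    (1 - γ)⁻¹ * Epmf (d x) f
      = f x + γ * policyTransition π P (fun y => (1 - γ)⁻¹ * Epmf (d y) f) x := by
  have h1γ : 1 - γ ≠ 0 := sub_ne_zero.2 hγ.symm
  rw [policyTransition_const_mul, hd x f, policyTransition]
  field_simp

end PolicyEvaluation

section LinkedMDP

variable {X Xτ A : Type*} [Fintype X] [Fintype Xτ] {γ : ℝ}
  {π : X → PMF A} {πτ : Xτ → PMF A} {P : X → A → PMF X} {Pτ : Xτ → A → PMF Xτ}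
  {b : X → PMF Xτ} {R : X → A → ℝ} {Rτ : Xτ → A → ℝ} {V : X → ℝ} {Vτ : Xτ → ℝ}
  {Q : X → A → ℝ} {Qτ : Xτ → A → ℝ}

lemma Epmf_belief_Q_sub_Q (hQ : ∀ x a, Q x a = R x a + γ * Epmf (P x a) V)
    (hQτ : ∀ xτ a, Qτ xτ a = Rτ xτ a + γ * Epmf (Pτ xτ a) Vτ)
    (hR : ∀ x a, R x a = Epmf (b x) (fun xτ => Rτ xτ a))
    (hcomm : ∀ x a (f : Xτ → ℝ),
      Epmf (b x) (fun xτ => Epmf (Pτ xτ a) f) = Epmf (P x a) (fun x' => Epmf (b x') f))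
    (x : X) (a : A) :
    Epmf (b x) (fun xτ => Qτ xτ a) - Q x a
      = γ * Epmf (P x a) (fun x' => Epmf (b x') Vτ - V x') := by
  have hQτa : (fun xτ => Qτ xτ a) = fun xτ => Rτ xτ a + γ * Epmf (Pτ xτ a) Vτ :=
    funext fun xτ => hQτ xτ a
  rw [hQτa, Epmf_add, Epmf_const_mul, ← hR, hcomm, hQ, Epmf_sub]
  ring

lemma valueGap_bellman [Fintype A]
    (hV : ∀ x, V x = Epmf (π x) (fun a => R x a + γ * Epmf (P x a) V))
    (hQ : ∀ x a, Q x a = R x a + γ * Epmf (P x a) V)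
    (hVτ : ∀ xτ, Vτ xτ = Epmf (πτ xτ) (fun a => Qτ xτ a))
    (hQτ : ∀ xτ a, Qτ xτ a = Rτ xτ a + γ * Epmf (Pτ xτ a) Vτ)
    (hR : ∀ x a, R x a = Epmf (b x) (fun xτ => Rτ xτ a))
    (hcomm : ∀ x a (f : Xτ → ℝ),
      Epmf (b x) (fun xτ => Epmf (Pτ xτ a) f) = Epmf (P x a) (fun x' => Epmf (b x') f))
    (x : X) :
    Epmf (b x) Vτ - V x
      = Epmf (b x) (fun xτ => Epmf (πτ xτ) (Qτ xτ) - Epmf (π x) (Qτ xτ))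
        + γ * policyTransition π P (fun x' => Epmf (b x') Vτ - V x') x := by
  have hVQ : V x = Epmf (π x) (Q x) := by
    rw [hV]
    exact congrArg _ (funext fun a => (hQ x a).symm)
  have hstep : γ * policyTransition π P (fun x' => Epmf (b x') Vτ - V x') x
      = Epmf (π x) (fun a => Epmf (b x) (fun xτ => Qτ xτ a) - Q x a) := by
    rw [policyTransition, ← Epmf_const_mul]
    exact congrArg _ (funext fun a => (Epmf_belief_Q_sub_Q hQ hQτ hR hcomm x a).symm)
  rw [hstep, Epmf_sub, Epmf_sub, Epmf_comm (b x) (π x), hVQ, funext hVτ]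
  ring

theorem delayed_performance_difference [Fintype A] {d : X → PMF X} (hγ : |γ| < 1)
    (hV : ∀ x, V x = Epmf (π x) (fun a => R x a + γ * Epmf (P x a) V))
    (hQ : ∀ x a, Q x a = R x a + γ * Epmf (P x a) V)
    (hVτ : ∀ xτ, Vτ xτ = Epmf (πτ xτ) (fun a => Qτ xτ a))
    (hQτ : ∀ xτ a, Qτ xτ a = Rτ xτ a + γ * Epmf (Pτ xτ a) Vτ)
    (hR : ∀ x a, R x a = Epmf (b x) (fun xτ => Rτ xτ a))
    (hcomm : ∀ x a (f : Xτ → ℝ),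
      Epmf (b x) (fun xτ => Epmf (Pτ xτ a) f) = Epmf (P x a) (fun x' => Epmf (b x') f))
    (hd : ∀ x₀ (f : X → ℝ), Epmf (d x₀) f
      = (1 - γ) * f x₀ + γ * Epmf (π x₀) (fun a => Epmf (P x₀ a) (fun x' => Epmf (d x') f)))
    (x : X) :
    Epmf (π x) (fun a => Epmf (b x) (fun xτ => Qτ xτ a) - Q x a)
      = γ / (1 - γ) * policyTransition π P (fun x' => Epmf (d x') fun xhat =>
          Epmf (b xhat) fun xτ => Epmf (πτ xτ) (Qτ xτ) - Epmf (π xhat) (Qτ xτ)) x := by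
  have hgap := bellman_solution_unique hγ (valueGap_bellman hV hQ hVτ hQτ hR hcomm)
    (visitation_bellman (abs_lt.1 hγ).2.ne hd _)
  have hstep : Epmf (π x) (fun a => Epmf (b x) (fun xτ => Qτ xτ a) - Q x a)
      = γ * policyTransition π P (fun x' => Epmf (b x') Vτ - V x') x := by
    rw [policyTransition, ← Epmf_const_mul]
    exact congrArg _ (funext (Epmf_belief_Q_sub_Q hQ hQτ hR hcomm x))
  rw [hstep, hgap, policyTransition_const_mul]
  ring

end LinkedMDP

/-- Delayed Q-value difference bound: under the linked-MDP assumptions (reward matching,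
kernel commutation, discounted visitation `d`) and `L_Q`-Lipschitzness of `Qτ` in actions,
`E_{a∼π(·|x), xτ∼b(·|x)}[Qτ(xτ,a) − Q(x,a)]` is bounded by
`(γ L_Q/(1−γ))` times the expected Wasserstein discrepancy between `πτ` and `π` along
the discounted visitation distribution started from the next state. -/
theorem delayed_q_value_difference_bound
    {X Xτ A : Type*} [Fintype X] [Fintype Xτ] [Fintype A] [MetricSpace A]
    (γ : ℝ) (hγ0 : 0 < γ) (hγ1 : γ < 1)
    (π : X → PMF A) (πτ : Xτ → PMF A)
    (P : X → A → PMF X) (Pτ : Xτ → A → PMF Xτ) (b : X → PMF Xτ)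
    (R : X → A → ℝ) (Rτ : Xτ → A → ℝ)
    (V : X → ℝ) (Vτ : Xτ → ℝ) (Q : X → A → ℝ) (Qτ : Xτ → A → ℝ)
    (d : X → PMF X) (LQ : ℝ)
    (hLip : ∀ (xτ : Xτ) (a₁ a₂ : A), |Qτ xτ a₁ - Qτ xτ a₂| ≤ LQ * dist a₁ a₂)
    (hV : ∀ x, V x = Epmf (π x) (fun a => R x a + γ * Epmf (P x a) V))
    (hQ : ∀ x a, Q x a = R x a + γ * Epmf (P x a) V)
    (hVτ : ∀ xτ, Vτ xτ = Epmf (πτ xτ) (fun a => Qτ xτ a))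
    (hQτ : ∀ xτ a, Qτ xτ a = Rτ xτ a + γ * Epmf (Pτ xτ a) Vτ)
    (hR : ∀ x a, R x a = Epmf (b x) (fun xτ => Rτ xτ a))
    (hcomm : ∀ x a (f : Xτ → ℝ),
      Epmf (b x) (fun xτ => Epmf (Pτ xτ a) f)
        = Epmf (P x a) (fun x' => Epmf (b x') f))
    (hd : ∀ x₀ (f : X → ℝ),
      Epmf (d x₀) f
        = (1 - γ) * f x₀
          + γ * Epmf (π x₀) (fun a => Epmf (P x₀ a) (fun x' => Epmf (d x') f))) :
    ∀ x : X,
      Epmf (π x) (fun a => Epmf (b x) (fun xτ => Qτ xτ a) - Q x a)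
        ≤ (γ * LQ / (1 - γ)) *
            Epmf (π x) (fun a =>
              Epmf (P x a) (fun x' =>
                Epmf (d x') (fun xhat =>
                  Epmf (b xhat) (fun xhatτ => W1 (πτ xhatτ) (π xhat))))) := by
  intro x
  have hadvantage : ∀ xhat, (Epmf (b xhat) fun xτ => Epmf (πτ xτ) (Qτ xτ) - Epmf (π xhat) (Qτ xτ))
      ≤ LQ * Epmf (b xhat) fun xτ => W1 (πτ xτ) (π xhat) := fun xhat =>
    (Epmf_mono _ fun xτ => Epmf_sub_le_mul_W1 _ _ (hLip xτ)).trans_eq (Epmf_const_mul _ _ _)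
  rw [delayed_performance_difference (abs_lt.2 ⟨by linarith, hγ1⟩) hV hQ hVτ hQτ hR hcomm hd x]
  calc γ / (1 - γ) * policyTransition π P (fun x' => Epmf (d x') fun xhat =>
          Epmf (b xhat) fun xτ => Epmf (πτ xτ) (Qτ xτ) - Epmf (π xhat) (Qτ xτ)) x
      ≤ γ / (1 - γ) * policyTransition π P (fun x' => Epmf (d x') fun xhat =>
          LQ * Epmf (b xhat) fun xτ => W1 (πτ xτ) (π xhat)) x := by
        have : 0 ≤ γ / (1 - γ) := div_nonneg hγ0.le (by linarith)
        gcongr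
        exact policyTransition_mono π P (fun x' => Epmf_mono _ hadvantage) x
    _ = _ := by
        simp only [Epmf_const_mul, policyTransition_const_mul]
        rw [policyTransition]
        ring
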